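/- Let D be an STS_2(v) with v ≥ 7 invariant under A_{v,f}, and let P be a 1-dimensional subspace of the eigenspace F of A_{v,f} for eigenvalue 1. Then the number of blocks of D passing through P that are not pointwise fixed by A_{v,f} equals (2^{v-1} - 2^{f-1})/3. -/

import Mathlib

/-- The action of a matrix `A` on subspaces of `GF(2)^v`, induced by the
right action `x ↦ x ⬝ A` on vectors. -/
def mapMat {v : ℕ} (A : Matrix (Fin v) (Fin v) (ZMod 2))
    (W : Submodule (ZMod 2) (Fin v → ZMod 2)) : Submodule (ZMod 2) (Fin v → ZMod 2) :=
  W.map A.vecMulLinear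

/-- A binary q-Steiner triple system `STS_2(v)`. -/
def IsSTS (v : ℕ) (D : Set (Submodule (ZMod 2) (Fin v → ZMod 2))) : Prop :=
  (∀ B ∈ D, Module.finrank (ZMod 2) B = 3) ∧
  ∀ L : Submodule (ZMod 2) (Fin v → ZMod 2), Module.finrank (ZMod 2) L = 2 →
    ∃! B, B ∈ D ∧ L ≤ B

/-- The block-diagonal matrix `A_{v,f}` over `GF(2)`: `(v-f)/2` consecutive 2×2 blocks
`[[0,1],[1,1]]` on the diagonal, followed by the `f×f` identity matrix. -/
def Avf (v f : ℕ) : Matrix (Fin v) (Fin v) (ZMod 2) :=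
  Matrix.of fun i j =>
    if (i : ℕ) < v - f then
      if (i : ℕ) % 2 = 0 then (if (j : ℕ) = (i : ℕ) + 1 then 1 else 0)
      else (if (j : ℕ) = (i : ℕ) - 1 ∨ (j : ℕ) = (i : ℕ) then 1 else 0)
    else (if j = i then 1 else 0)

/-- A subspace is pointwise fixed by `A` if every 1-dimensional subspace of it is
fixed by `A`. -/
def PointwiseFixed {v : ℕ} (A : Matrix (Fin v) (Fin v) (ZMod 2))
    (E : Submodule (ZMod 2) (Fin v → ZMod 2)) : Prop :=
  ∀ P : Submodule (ZMod 2) (Fin v → ZMod 2),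
    Module.finrank (ZMod 2) P = 1 → P ≤ E → mapMat A P = P

/-- The eigenspace of `A` (acting by `x ↦ x ⬝ A`) for the eigenvalue `1`. -/
def eigOne {v : ℕ} (A : Matrix (Fin v) (Fin v) (ZMod 2)) :
    Submodule (ZMod 2) (Fin v → ZMod 2) :=
  LinearMap.ker (A.vecMulLinear - LinearMap.id)

/-!
Double count the pairs `(L, B)` where `L` is a plane through `P` not contained in the fixed space
`F` of `A = A_{v,f}` and `B` is the block through `L`. There are `2^(v-1) - 2^(f-1)` such
planes, each lies in exactly one block, and that block is not pointwise fixed. Conversely, a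
block `B` through a plane `L ≤ F` is `A`-invariant (both `B` and `B·A` are the block through
`L`), and since `A³ = 1` in characteristic 2, an invariant 3-space containing a pointwise fixed
plane is pointwise fixed. Hence all three planes through `P` in a block that is not pointwise
fixed lie outside `F`, and every such block is counted exactly three times.
-/

open Matrix Module Submodule

lemma Nat.card_eq_mul_of_card_fiber {α β : Type*} [Finite α] [Finite β] (g : α → β)
    {n : ℕ} (h : ∀ b, Nat.card {a // g a = b} = n) : Nat.card α = n * Nat.card β := by
  have := Fintype.ofFinite β
  rw [← Nat.card_congr (Equiv.sigmaFiberEquiv g), Nat.card_sigma,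
    Finset.sum_congr rfl fun b _ => h b, Finset.sum_const, Finset.card_univ, smul_eq_mul,
    Nat.card_eq_fintype_card, mul_comm]

section ZModTwo

variable {M : Type*} [AddCommGroup M] [Module (ZMod 2) M]

lemma mem_span_singleton_zmod_two {x y : M} : y ∈ span (ZMod 2) {x} ↔ y = 0 ∨ y = x := by
  rw [mem_span_singleton]
  constructor
  · rintro ⟨c, rfl⟩
    obtain rfl | rfl : c = 0 ∨ c = 1 := by decide +revert
    exacts [Or.inl (zero_smul _ x), Or.inr (one_smul _ x)]
  · rintro (rfl | rfl)
    exacts [⟨0, zero_smul _ x⟩, ⟨1, one_smul _ _⟩]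

variable [Finite M]

lemma natCard_submodule_zmod_two (W : Submodule (ZMod 2) M) :
    Nat.card W = 2 ^ finrank (ZMod 2) W := by
  rw [Module.natCard_eq_pow_finrank (K := ZMod 2), Nat.card_zmod]

lemma natCard_sdiff_submodule_zmod_two {P W : Submodule (ZMod 2) M} (hPW : P ≤ W) :
    Nat.card ↥((W : Set M) \ P) = 2 ^ finrank (ZMod 2) W - 2 ^ finrank (ZMod 2) P := by
  rw [Nat.card_coe_set_eq, Set.ncard_sdiff (by exact_mod_cast hPW), ← Nat.card_coe_set_eq,
    ← Nat.card_coe_set_eq, SetLike.coe_sort_coe, SetLike.coe_sort_coe,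
    natCard_submodule_zmod_two, natCard_submodule_zmod_two]

lemma card_lines_through (P W : Submodule (ZMod 2) M) (hP : finrank (ZMod 2) P = 1)
    (hPW : P ≤ W) :
    Nat.card {L : Submodule (ZMod 2) M | finrank (ZMod 2) L = 2 ∧ P ≤ L ∧ L ≤ W} =
      2 ^ (finrank (ZMod 2) W - 1) - 1 := by
  set lines := {L : Submodule (ZMod 2) M | finrank (ZMod 2) L = 2 ∧ P ≤ L ∧ L ≤ W}
  have hline : ∀ x : ↥((W : Set M) \ P), P ⊔ span (ZMod 2) {x.1} ∈ lines := fun x =>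
    ⟨by rw [finrank_sup_span_singleton x.2.2, hP], le_sup_left,
      sup_le hPW (span_singleton_le_iff_mem _ _ |>.mpr x.2.1)⟩
  let g : ↥((W : Set M) \ P) → lines := fun x => ⟨_, hline x⟩
  have hfibre : ∀ L, Nat.card {x // g x = L} = 2 := by
    rintro ⟨L, hL, hPL, hLW⟩
    have hg : ∀ x, g x = ⟨L, hL, hPL, hLW⟩ ↔ x.1 ∈ L := fun x => by
      refine ⟨fun h => ?_, fun h => Subtype.ext ?_⟩
      · obtain rfl : P ⊔ span (ZMod 2) {x.1} = L := congrArg Subtype.val h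
        exact mem_sup_right (mem_span_singleton_self _)
      · exact eq_of_le_of_finrank_eq (sup_le hPL (span_singleton_le_iff_mem _ _ |>.mpr h))
          (by rw [(hline x).1, hL])
    have e : {x // g x = ⟨L, hL, hPL, hLW⟩} ≃ ↥((L : Set M) \ P) :=
      { toFun := fun x => ⟨x.1.1, (hg x.1).mp x.2, x.1.2.2⟩
        invFun := fun y => ⟨⟨y.1, hLW y.2.1, y.2.2⟩, (hg _).mpr y.2.1⟩
        left_inv := fun _ => rfl
        right_inv := fun _ => rfl }
    rw [Nat.card_congr e, natCard_sdiff_submodule_zmod_two hPL, hL, hP]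
    rfl
  have hcount := Nat.card_eq_mul_of_card_fiber g hfibre
  rw [natCard_sdiff_submodule_zmod_two hPW, hP] at hcount
  have hW : 1 ≤ finrank (ZMod 2) W := hP ▸ finrank_mono hPW
  rw [← Nat.sub_add_cancel hW, pow_succ] at hcount
  omega

lemma card_lines_through_not_le (P W : Submodule (ZMod 2) M) (hP : finrank (ZMod 2) P = 1)
    (hPW : P ≤ W) :
    Nat.card {L : Submodule (ZMod 2) M | finrank (ZMod 2) L = 2 ∧ P ≤ L ∧ ¬ L ≤ W} =
      2 ^ (finrank (ZMod 2) M - 1) - 2 ^ (finrank (ZMod 2) W - 1) := by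
  have hdiff : {L : Submodule (ZMod 2) M | finrank (ZMod 2) L = 2 ∧ P ≤ L ∧ ¬ L ≤ W} =
      {L : Submodule (ZMod 2) M | finrank (ZMod 2) L = 2 ∧ P ≤ L ∧ L ≤ ⊤} \
        {L | finrank (ZMod 2) L = 2 ∧ P ≤ L ∧ L ≤ W} := by
    ext L
    simp only [Set.mem_ofPred_eq, Set.mem_sdiff, le_top, and_true, not_and]
    tauto
  have hsub : {L : Submodule (ZMod 2) M | finrank (ZMod 2) L = 2 ∧ P ≤ L ∧ L ≤ W} ⊆
      {L | finrank (ZMod 2) L = 2 ∧ P ≤ L ∧ L ≤ ⊤} := fun _ hL =>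
    ⟨hL.1, hL.2.1, le_top⟩
  rw [hdiff, Nat.card_coe_set_eq, Set.ncard_sdiff hsub, ← Nat.card_coe_set_eq,
    ← Nat.card_coe_set_eq, card_lines_through P ⊤ hP le_top, card_lines_through P W hP hPW,
    finrank_top]
  have := Nat.one_le_two_pow (n := finrank (ZMod 2) W - 1)
  omega

end ZModTwo

section OrderThree

variable {v : ℕ} {A : Matrix (Fin v) (Fin v) (ZMod 2)}

lemma mem_eigOne_iff {x : Fin v → ZMod 2} : x ∈ eigOne A ↔ x ᵥ* A = x := by
  rw [eigOne, LinearMap.mem_ker, LinearMap.sub_apply, LinearMap.id_apply, sub_eq_zero,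
    vecMulLinear_apply]

lemma mapMat_eq_self_of_le_eigOne {W : Submodule (ZMod 2) (Fin v → ZMod 2)}
    (hW : W ≤ eigOne A) : mapMat A W = W := by
  ext y
  constructor
  · rintro ⟨x, hx, rfl⟩
    rwa [vecMulLinear_apply, mem_eigOne_iff.mp (hW hx)]
  · exact fun hy => ⟨y, hy, mem_eigOne_iff.mp (hW hy)⟩

lemma vecMul_vecMul_vecMul_of_pow_three (hA : A ^ 3 = 1) (x : Fin v → ZMod 2) :
    x ᵥ* A ᵥ* A ᵥ* A = x := by
  rw [vecMul_vecMul, vecMul_vecMul, ← pow_three, hA, vecMul_one]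

lemma pointwiseFixed_iff_le_eigOne (hA : A ^ 3 = 1)
    {B : Submodule (ZMod 2) (Fin v → ZMod 2)} :
    PointwiseFixed A B ↔ B ≤ eigOne A := by
  refine ⟨fun hB x hx => ?_, fun hB P _ hPB => mapMat_eq_self_of_le_eigOne (hPB.trans hB)⟩
  rw [mem_eigOne_iff]
  by_cases hx0 : x = 0
  · rw [hx0, zero_vecMul]
  have hline := hB _ (finrank_span_singleton hx0) (span_singleton_le_iff_mem _ _ |>.mpr hx)
  rw [mapMat, map_span, Set.image_singleton, vecMulLinear_apply] at hline
  have hxA : x ᵥ* A ∈ span (ZMod 2) {x} := hline ▸ mem_span_singleton_self _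
  refine (mem_span_singleton_zmod_two.mp hxA).resolve_left fun h => hx0 ?_
  rw [← vecMul_vecMul_vecMul_of_pow_three hA x, h, zero_vecMul, zero_vecMul]

lemma vecMul_eq_self_of_mem_sup_span (hA : A ^ 3 = 1)
    {L : Submodule (ZMod 2) (Fin v → ZMod 2)} (hL : L ≤ eigOne A) {x : Fin v → ZMod 2}
    (hx : x ᵥ* A ∈ L ⊔ span (ZMod 2) {x}) : x ᵥ* A = x := by
  obtain ⟨l, hl, y, hy, hxA⟩ := mem_sup.mp hx
  have hlA : l ᵥ* A = l := mem_eigOne_iff.mp (hL hl)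
  -- `x A = l` or `x A = l + x`; either way `x A³ = x A`
  have h3 : x ᵥ* A ᵥ* A ᵥ* A = x ᵥ* A := by
    rcases mem_span_singleton_zmod_two.mp hy with rfl | rfl
    · rw [add_zero] at hxA
      rw [← hxA, hlA, hlA]
    · have h2 : y ᵥ* A ᵥ* A = y := by
        rw [← hxA, add_vecMul, hlA, ← hxA, ← add_assoc, ← two_nsmul,
          ZModModule.char_nsmul_eq_zero, zero_add]
      rw [h2]
  rw [← h3, vecMul_vecMul_vecMul_of_pow_three hA]

lemma le_eigOne_of_map_eq_self (hA : A ^ 3 = 1) {B L : Submodule (ZMod 2) (Fin v → ZMod 2)}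
    (hBA : mapMat A B = B) (hLB : L ≤ B) (hcodim : finrank (ZMod 2) B = finrank (ZMod 2) L + 1)
    (hL : L ≤ eigOne A) : B ≤ eigOne A := by
  intro x hxB
  by_cases hxL : x ∈ L
  · exact hL hxL
  have hB : L ⊔ span (ZMod 2) {x} = B :=
    eq_of_le_of_finrank_eq (sup_le hLB (span_singleton_le_iff_mem _ _ |>.mpr hxB))
      (by rw [finrank_sup_span_singleton hxL, hcodim])
  have hxA : x ᵥ* A ∈ B := hBA ▸ mem_map_of_mem hxB
  exact mem_eigOne_iff.mpr (vecMul_eq_self_of_mem_sup_span hA hL (hB ▸ hxA))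

end OrderThree

namespace IsSTS

variable {v : ℕ} {D : Set (Submodule (ZMod 2) (Fin v → ZMod 2))}
  {L : Submodule (ZMod 2) (Fin v → ZMod 2)}

noncomputable def block (hD : IsSTS v D) (hL : finrank (ZMod 2) L = 2) :
    Submodule (ZMod 2) (Fin v → ZMod 2) :=
  (hD.2 L hL).exists.choose

lemma block_mem (hD : IsSTS v D) (hL : finrank (ZMod 2) L = 2) : hD.block hL ∈ D :=
  (hD.2 L hL).exists.choose_spec.1

lemma le_block (hD : IsSTS v D) (hL : finrank (ZMod 2) L = 2) : L ≤ hD.block hL :=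
  (hD.2 L hL).exists.choose_spec.2

lemma eq_block (hD : IsSTS v D) (hL : finrank (ZMod 2) L = 2)
    {B : Submodule (ZMod 2) (Fin v → ZMod 2)} (hB : B ∈ D) (hLB : L ≤ B) :
    B = hD.block hL :=
  (hD.2 L hL).unique ⟨hB, hLB⟩ ⟨hD.block_mem hL, hD.le_block hL⟩

lemma le_eigOne_of_mem_of_le (hD : IsSTS v D) (hL : finrank (ZMod 2) L = 2)
    {A : Matrix (Fin v) (Fin v) (ZMod 2)} (hA : A ^ 3 = 1) (hinv : mapMat A '' D = D)
    {B : Submodule (ZMod 2) (Fin v → ZMod 2)} (hB : B ∈ D) (hLB : L ≤ B)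
    (hLF : L ≤ eigOne A) : B ≤ eigOne A := by
  have hAB : mapMat A B ∈ D := hinv ▸ Set.mem_image_of_mem _ hB
  have hLAB : L ≤ mapMat A B := mapMat_eq_self_of_le_eigOne hLF ▸ map_mono hLB
  have hBA : mapMat A B = B := (hD.eq_block hL hAB hLAB).trans (hD.eq_block hL hB hLB).symm
  exact le_eigOne_of_map_eq_self hA hBA hLB (by rw [hD.1 B hB, hL]) hLF

lemma three_mul_card_not_pointwiseFixed (hD : IsSTS v D)
    {A : Matrix (Fin v) (Fin v) (ZMod 2)} (hA : A ^ 3 = 1) (hinv : mapMat A '' D = D)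
    {P : Submodule (ZMod 2) (Fin v → ZMod 2)} (hP : finrank (ZMod 2) P = 1)
    (hPF : P ≤ eigOne A) :
    3 * Nat.card {B : Submodule (ZMod 2) (Fin v → ZMod 2) |
        B ∈ D ∧ P ≤ B ∧ ¬ PointwiseFixed A B} =
      2 ^ (v - 1) - 2 ^ (finrank (ZMod 2) (eigOne A) - 1) := by
  set lines := {L : Submodule (ZMod 2) (Fin v → ZMod 2) |
    finrank (ZMod 2) L = 2 ∧ P ≤ L ∧ ¬ L ≤ eigOne A}
  set blocks := {B : Submodule (ZMod 2) (Fin v → ZMod 2) |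
    B ∈ D ∧ P ≤ B ∧ ¬ PointwiseFixed A B}
  have hblock : ∀ L : lines, hD.block L.2.1 ∈ blocks := fun L =>
    ⟨hD.block_mem L.2.1, L.2.2.1.trans (hD.le_block L.2.1),
      fun h => L.2.2.2 ((hD.le_block L.2.1).trans ((pointwiseFixed_iff_le_eigOne hA).mp h))⟩
  let g : lines → blocks := fun L => ⟨_, hblock L⟩
  have hfibre : ∀ B, Nat.card {L // g L = B} = 3 := by
    rintro ⟨B, hB, hPB, hBA⟩
    have hnot : ∀ L : Submodule (ZMod 2) (Fin v → ZMod 2),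
        finrank (ZMod 2) L = 2 → L ≤ B → ¬ L ≤ eigOne A := fun L hL hLB hLF =>
      hBA <| (pointwiseFixed_iff_le_eigOne hA).mpr <|
        hD.le_eigOne_of_mem_of_le hL hA hinv hB hLB hLF
    have e : {L // g L = ⟨B, hB, hPB, hBA⟩} ≃
        {L : Submodule (ZMod 2) (Fin v → ZMod 2) |
          finrank (ZMod 2) L = 2 ∧ P ≤ L ∧ L ≤ B} :=
      { toFun := fun L => ⟨L.1.1, L.1.2.1, L.1.2.2.1,
          (hD.le_block L.1.2.1).trans_eq (congrArg Subtype.val L.2)⟩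
        invFun := fun L => ⟨⟨L.1, L.2.1, L.2.2.1, hnot _ L.2.1 L.2.2.2⟩,
          Subtype.ext (hD.eq_block L.2.1 hB L.2.2.2).symm⟩
        left_inv := fun _ => rfl
        right_inv := fun _ => rfl }
    rw [Nat.card_congr e, card_lines_through P B hP hPB, hD.1 B hB]
    rfl
  rw [← Nat.card_eq_mul_of_card_fiber g hfibre, card_lines_through_not_le P _ hP hPF,
    finrank_fin_fun]

end IsSTS

section Avf

variable {v f : ℕ}

lemma vecMul_Avf_pair (x : Fin v → ZMod 2) {i j : Fin v} (hj : (j : ℕ) % 2 = 0)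
    (hij : (i : ℕ) = j + 1) (hi : (i : ℕ) < v - f) :
    (x ᵥ* Avf v f) j = x i ∧ (x ᵥ* Avf v f) i = x j + x i := by
  have hji : j ≠ i := fun h => by omega
  constructor
  · rw [vecMul, dotProduct, Finset.sum_eq_single i (fun k _ hk => ?_) (by simp)]
    · simp only [Avf, of_apply]
      split_ifs <;> first | omega | simp
    · simp only [Avf, of_apply, Fin.ext_iff, ne_eq] at hk ⊢
      split_ifs <;> first | omega | simp
  · rw [vecMul, dotProduct, Finset.sum_eq_add_of_mem j i (by simp) (by simp) hji
      (fun k _ hk => ?_)]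
    · simp only [Avf, of_apply]
      split_ifs <;> first | omega | simp_all
    · simp only [Avf, of_apply, Fin.ext_iff, ne_eq] at hk ⊢
      split_ifs <;> first | omega | simp

lemma vecMul_Avf_of_le (hvf : Even (v - f)) (x : Fin v → ZMod 2) {j : Fin v}
    (hj : v - f ≤ (j : ℕ)) :
    (x ᵥ* Avf v f) j = x j := by
  rw [Nat.even_iff] at hvf
  rw [vecMul, dotProduct, Finset.sum_eq_single j (fun k _ hk => ?_) (by simp)]
  · simp only [Avf, of_apply]
    split_ifs <;> first | omega | simp
  · simp only [Avf, of_apply, Fin.ext_iff, ne_eq] at hk ⊢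
    split_ifs <;> first | omega | simp_all

lemma exists_Avf_pair (hvf : Even (v - f)) {k : Fin v} (hk : (k : ℕ) < v - f) :
    ∃ i j : Fin v,
      (j : ℕ) % 2 = 0 ∧ (i : ℕ) = j + 1 ∧ (i : ℕ) < v - f ∧ (k = j ∨ k = i) := by
  rw [Nat.even_iff] at hvf
  rcases Nat.mod_two_eq_zero_or_one k with hk2 | hk2
  · exact ⟨⟨k + 1, by omega⟩, k, hk2, rfl, by simp only; omega, Or.inl rfl⟩
  · exact ⟨k, ⟨k - 1, by omega⟩, by simp only; omega, by simp only; omega, hk, Or.inr rfl⟩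

lemma Avf_pow_three (hvf : Even (v - f)) : Avf v f ^ 3 = 1 := by
  rw [ext_iff_vecMul]
  intro x
  ext k
  rw [pow_three, vecMul_one, ← vecMul_vecMul, ← vecMul_vecMul]
  by_cases hk : (k : ℕ) < v - f
  · obtain ⟨i, j, hj, hij, hi, rfl | rfl⟩ := exists_Avf_pair hvf hk
    all_goals simp only [vecMul_Avf_pair _ hj hij hi]; grind
  · simp only [vecMul_Avf_of_le hvf _ (not_lt.mp hk)]

lemma mem_eigOne_Avf_iff (hvf : Even (v - f)) {x : Fin v → ZMod 2} :
    x ∈ eigOne (Avf v f) ↔ ∀ k : Fin v, (k : ℕ) < v - f → x k = 0 := by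
  rw [mem_eigOne_iff, funext_iff]
  constructor
  · intro h k hk
    obtain ⟨i, j, hj, hij, hi, rfl | rfl⟩ := exists_Avf_pair hvf hk <;>
    · have hpair := vecMul_Avf_pair x hj hij hi
      rw [h, h] at hpair
      grind
  · intro h k
    by_cases hk : (k : ℕ) < v - f
    · obtain ⟨i, j, hj, hij, hi, hk⟩ := exists_Avf_pair hvf hk
      have hxi := h i hi
      have hxj := h j (by omega)
      rcases hk with rfl | rfl <;> simp [vecMul_Avf_pair x hj hij hi, hxi, hxj]
    · exact vecMul_Avf_of_le hvf x (not_lt.mp hk)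

lemma finrank_eigOne_Avf (hfv : f ≤ v) (hvf : Even (v - f)) :
    finrank (ZMod 2) (eigOne (Avf v f)) = f := by
  let restrict : (Fin v → ZMod 2) →ₗ[ZMod 2] (Fin (v - f) → ZMod 2) :=
    LinearMap.funLeft (ZMod 2) (ZMod 2) (Fin.castLE (Nat.sub_le v f))
  have hker : eigOne (Avf v f) = LinearMap.ker restrict := by
    ext x
    simp only [mem_eigOne_Avf_iff hvf, LinearMap.mem_ker, restrict, funext_iff,
      LinearMap.funLeft_apply, Pi.zero_apply]
    exact ⟨fun h k => h _ k.isLt, fun h k hk => h ⟨k, hk⟩⟩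
  have hsurj : Function.Surjective restrict :=
    LinearMap.funLeft_surjective_of_injective _ _ _ (Fin.castLE_injective _)
  have hrank := LinearMap.finrank_range_add_finrank_ker restrict
  rw [LinearMap.range_eq_top.mpr hsurj, finrank_top, finrank_fin_fun, finrank_fin_fun,
    ← hker] at hrank
  omega

end Avf

theorem stmt12_general (v f : ℕ) (hf : f ≤ v - 1) (hvf : Even (v - f))
    (D : Set (Submodule (ZMod 2) (Fin v → ZMod 2))) (hD : IsSTS v D)
    (hinv : (mapMat (Avf v f)) '' D = D)
    (P : Submodule (ZMod 2) (Fin v → ZMod 2))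
    (hP : Module.finrank (ZMod 2) P = 1) (hPF : P ≤ eigOne (Avf v f)) :
    Nat.card {B : Submodule (ZMod 2) (Fin v → ZMod 2) |
        B ∈ D ∧ P ≤ B ∧ ¬ PointwiseFixed (Avf v f) B}
      = (2 ^ (v - 1) - 2 ^ (f - 1)) / 3 := by
  have hcount := hD.three_mul_card_not_pointwiseFixed (Avf_pow_three hvf) hinv hP hPF
  rw [finrank_eigOne_Avf (by omega) hvf] at hcount
  omega

/-- For an `STS_2(v)` with `v ≥ 7` invariant under `A_{v,f}` and a point `P` of the
eigenspace of `A_{v,f}` for the eigenvalue 1, the number of blocks through `P` that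
are not pointwise fixed by `A_{v,f}` equals `(2^{v-1} - 2^{f-1})/3`. -/
theorem stmt12 (v f : ℕ) (hv : 7 ≤ v) (hf : f ≤ v - 1) (hvf : Even (v - f))
    (D : Set (Submodule (ZMod 2) (Fin v → ZMod 2))) (hD : IsSTS v D)
    (hinv : (mapMat (Avf v f)) '' D = D)
    (P : Submodule (ZMod 2) (Fin v → ZMod 2))
    (hP : Module.finrank (ZMod 2) P = 1) (hPF : P ≤ eigOne (Avf v f)) :
    Nat.card {B : Submodule (ZMod 2) (Fin v → ZMod 2) |
        B ∈ D ∧ P ≤ B ∧ ¬ PointwiseFixed (Avf v f) B}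
      = (2 ^ (v - 1) - 2 ^ (f - 1)) / 3 :=
  stmt12_general v f hf hvf D hD hinv P hP hPF
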